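/- arXiv:1806.08071 — 4 statements merged into one kernel-verified Lean document; each statement's English description precedes it below -/
import Mathlib

section
/- Let n,m,p,q ∈ ℕ, A ∈ ℝ^{n×n}, B₁ ∈ ℝ^{n×m}, B₂ ∈ ℝ^{n×p}, C₁ ∈ ℝ^{q×n}, D₁ ∈ ℝ^{q×m}, D₂ ∈ ℝ^{q×p}, and γ > 0. Suppose P ∈ ℝ^{n×n} is symmetric positive definite and Z ∈ ℝ^{p×n} is such that the symmetric block matrix [[PAᵀ + AP + ZᵀB₂ᵀ + B₂Z, B₁, PC₁ᵀ + ZᵀD₂ᵀ], [B₁ᵀ, −γI_m, D₁ᵀ], [C₁P + D₂Z, D₁, −γI_q]] is negative semidefinite. Let K = Z P⁻¹. Then for every continuous w : [0,∞) → ℝ^m and every continuously differentiable x : [0,∞) → ℝⁿ with x(0) = 0 and x′(t) = (A + B₂K)x(t) + B₁w(t) for all t ≥ 0, the output y(t) := (C₁ + D₂K)x(t) + D₁w(t) satisfies ∫₀^∞ ‖y(t)‖² dt ≤ γ² ∫₀^∞ ‖w(t)‖² dt. -/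
/-!
With `Q = P⁻¹` and the storage function `V(x) = γ xᵀ Q x`, the congruence `diag(P⁻¹, I, I)` turns
the synthesis LMI into the closed-loop LMI for `K = Z P⁻¹`; completing the square in its last
block (at `v = γ⁻¹ y`) gives the dissipation inequality `‖y‖² + V̇ ≤ γ² ‖w‖²` along trajectories.
Integrating over `[0, T]` with `V(x(0)) = 0 ≤ V(x(T))` yields `∫₀ᵀ ‖y‖² ≤ γ² ∫₀ᵀ ‖w‖²`, and
`T → ∞` gives the bound.
-/

open MeasureTheory Matrix Set

section Calculus

variable {𝕜 ι κ : Type*} [NontriviallyNormedField 𝕜] [Fintype ι]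
  {x y : 𝕜 → ι → 𝕜} {x' y' : ι → 𝕜} {t : 𝕜}

theorem HasDerivAt.dotProduct (hx : HasDerivAt x x' t) (hy : HasDerivAt y y' t) :
    HasDerivAt (fun s => x s ⬝ᵥ y s) (x' ⬝ᵥ y t + x t ⬝ᵥ y') t := by
  have := HasDerivAt.fun_sum fun i (_ : i ∈ Finset.univ) =>
    (hasDerivAt_pi.mp hx i).mul (hasDerivAt_pi.mp hy i)
  rwa [Finset.sum_add_distrib] at this

theorem HasDerivAt.matrix_mulVec (M : Matrix κ ι 𝕜) (hx : HasDerivAt x x' t) :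
    HasDerivAt (fun s => M *ᵥ x s) (M *ᵥ x') t :=
  hasDerivAt_pi.mpr fun i =>
    HasDerivAt.fun_sum fun j _ => (hasDerivAt_pi.mp hx j).const_mul (M i j)

theorem HasDerivAt.dotProduct_mulVec_self {Q : Matrix ι ι 𝕜} (hQ : Qᵀ = Q)
    (hx : HasDerivAt x x' t) :
    HasDerivAt (fun s => x s ⬝ᵥ Q *ᵥ x s) (2 * (x t ⬝ᵥ Q *ᵥ x')) t := by
  convert hx.dotProduct (hx.matrix_mulVec Q) using 1
  have hswap := dotProduct_transpose_mulVec Q x' (x t)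
  rw [hQ] at hswap
  rw [hswap, two_mul]

end Calculus

theorem setLIntegral_Ioi_le_of_forall_Ioc {f : ℝ → ENNReal} {a : ℝ} {C : ENNReal}
    (h : ∀ b, a ≤ b → ∫⁻ t in Ioc a b, f t ≤ C) : ∫⁻ t in Ioi a, f t ≤ C := by
  have hIoi : ⋃ N : ℕ, Ioc a (a + N) = Ioi a :=
    iUnion_Ioc_eq_Ioi_self_iff.mpr fun t _ =>
      (exists_nat_ge (t - a)).imp fun N hN => by linarith
  have hmono : Monotone fun N : ℕ => Ioc a (a + N) := fun i j hij =>
    Ioc_subset_Ioc_right (by gcongr)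
  rw [← hIoi, setLIntegral_iUnion_of_directed _ hmono.directed_le]
  exact iSup_le fun N => h _ (by simp)

section Dissipation

variable {G S V V' : ℝ → ℝ} {a b : ℝ}

theorem intervalIntegral_le_of_dissipation (hab : a ≤ b) (hG : ContinuousOn G (Icc a b))
    (hS : ContinuousOn S (Icc a b)) (hV' : ContinuousOn V' (Icc a b))
    (hV : ∀ t ∈ Icc a b, HasDerivAt V (V' t) t) (hVab : V a ≤ V b)
    (hdiss : ∀ t ∈ Icc a b, G t + V' t ≤ S t) :
    ∫ t in a..b, G t ≤ ∫ t in a..b, S t := by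
  have hGi := hG.intervalIntegrable_of_Icc (μ := volume) hab
  have hV'i := hV'.intervalIntegrable_of_Icc (μ := volume) hab
  have hFTC : ∫ t in a..b, V' t = V b - V a :=
    intervalIntegral.integral_eq_sub_of_hasDerivAt (by rwa [uIcc_of_le hab]) hV'i
  have hmono := intervalIntegral.integral_mono_on hab (hGi.add hV'i)
    (hS.intervalIntegrable_of_Icc hab) hdiss
  rw [intervalIntegral.integral_add hGi hV'i, hFTC] at hmono
  linarith

theorem ofReal_intervalIntegral_eq_setLIntegral_Ioc (hab : a ≤ b)
    (hG : ContinuousOn G (Icc a b)) (hG_nonneg : ∀ t ∈ Ioc a b, 0 ≤ G t) :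
    ENNReal.ofReal (∫ t in a..b, G t) = ∫⁻ t in Ioc a b, ENNReal.ofReal (G t) := by
  rw [intervalIntegral.integral_of_le hab]
  exact ofReal_integral_eq_lintegral_ofReal
    ((hG.integrableOn_Icc).mono_set Ioc_subset_Icc_self)
    (ae_restrict_of_forall_mem measurableSet_Ioc hG_nonneg)

theorem setLIntegral_Ioi_ofReal_le_of_dissipation (hG : ContinuousOn G (Ici a))
    (hS : ContinuousOn S (Ici a)) (hV' : ContinuousOn V' (Ici a))
    (hV : ∀ t ∈ Ici a, HasDerivAt V (V' t) t) (hV_ge : ∀ t ∈ Ici a, V a ≤ V t)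
    (hG_nonneg : ∀ t ∈ Ici a, 0 ≤ G t) (hS_nonneg : ∀ t ∈ Ici a, 0 ≤ S t)
    (hdiss : ∀ t ∈ Ici a, G t + V' t ≤ S t) :
    ∫⁻ t in Ioi a, ENNReal.ofReal (G t) ≤ ∫⁻ t in Ioi a, ENNReal.ofReal (S t) := by
  refine setLIntegral_Ioi_le_of_forall_Ioc fun b hab => ?_
  have hsub : Icc a b ⊆ Ici a := Icc_subset_Ici_self
  have hIoc : Ioc a b ⊆ Ici a := Ioc_subset_Icc_self.trans hsub
  calc ∫⁻ t in Ioc a b, ENNReal.ofReal (G t)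
      = ENNReal.ofReal (∫ t in a..b, G t) :=
        (ofReal_intervalIntegral_eq_setLIntegral_Ioc hab (hG.mono hsub)
          fun t ht => hG_nonneg t (hIoc ht)).symm
    _ ≤ ENNReal.ofReal (∫ t in a..b, S t) :=
        ENNReal.ofReal_le_ofReal <| intervalIntegral_le_of_dissipation hab (hG.mono hsub)
          (hS.mono hsub) (hV'.mono hsub) (fun t ht => hV t (hsub ht)) (hV_ge b hab)
          fun t ht => hdiss t (hsub ht)
    _ = ∫⁻ t in Ioc a b, ENNReal.ofReal (S t) :=
        ofReal_intervalIntegral_eq_setLIntegral_Ioc hab (hS.mono hsub)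
          fun t ht => hS_nonneg t (hIoc ht)
    _ ≤ ∫⁻ t in Ioi a, ENNReal.ofReal (S t) := lintegral_mono_set Ioc_subset_Ioi_self

end Dissipation

section SynthesisLMI

variable {n m p q : Type*} [Fintype n] [DecidableEq n] [Fintype m] [Fintype p] [Fintype q]

def SynthesisLMI (A : Matrix n n ℝ) (B₁ : Matrix n m ℝ) (B₂ : Matrix n p ℝ)
    (C₁ : Matrix q n ℝ) (D₁ : Matrix q m ℝ) (D₂ : Matrix q p ℝ) (γ : ℝ)
    (P : Matrix n n ℝ) (Z : Matrix p n ℝ) : Prop :=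
  ∀ (z : n → ℝ) (w : m → ℝ) (v : q → ℝ),
    z ⬝ᵥ (P * Aᵀ + A * P + Zᵀ * B₂ᵀ + B₂ * Z) *ᵥ z + 2 * (z ⬝ᵥ B₁ *ᵥ w)
      + 2 * (z ⬝ᵥ (P * C₁ᵀ + Zᵀ * D₂ᵀ) *ᵥ v) - γ * (w ⬝ᵥ w) + 2 * (w ⬝ᵥ D₁ᵀ *ᵥ v)
      - γ * (v ⬝ᵥ v) ≤ 0

variable {A : Matrix n n ℝ} {B₁ : Matrix n m ℝ} {B₂ : Matrix n p ℝ} {C₁ : Matrix q n ℝ}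
  {D₁ : Matrix q m ℝ} {D₂ : Matrix q p ℝ} {γ : ℝ} {P : Matrix n n ℝ} {Z : Matrix p n ℝ}

theorem SynthesisLMI.closedLoop_nonpos (h : SynthesisLMI A B₁ B₂ C₁ D₁ D₂ γ P Z) (hP : P.IsSymm)
    (hPdet : IsUnit P.det) (x : n → ℝ) (w : m → ℝ) (v : q → ℝ) :
    2 * (x ⬝ᵥ P⁻¹ *ᵥ ((A + B₂ * (Z * P⁻¹)) *ᵥ x + B₁ *ᵥ w))
      + 2 * (((C₁ + D₂ * (Z * P⁻¹)) *ᵥ x + D₁ *ᵥ w) ⬝ᵥ v)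
      - γ * (w ⬝ᵥ w) - γ * (v ⬝ᵥ v) ≤ 0 := by
  have hPP : P * P⁻¹ = 1 := mul_nonsing_inv P hPdet
  have hM : (A * P + B₂ * Z) * P⁻¹ = A + B₂ * (Z * P⁻¹) := by
    rw [Matrix.add_mul, Matrix.mul_assoc, hPP, Matrix.mul_one, Matrix.mul_assoc]
  have hN : (C₁ * P + D₂ * Z) * P⁻¹ = C₁ + D₂ * (Z * P⁻¹) := by
    rw [Matrix.add_mul, Matrix.mul_assoc, hPP, Matrix.mul_one, Matrix.mul_assoc]
  have h₁ : P * Aᵀ + A * P + Zᵀ * B₂ᵀ + B₂ * Z = (A * P + B₂ * Z)ᵀ + (A * P + B₂ * Z) := by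
    rw [transpose_add, transpose_mul, transpose_mul, hP.eq]; abel
  have h₃ : P * C₁ᵀ + Zᵀ * D₂ᵀ = (C₁ * P + D₂ * Z)ᵀ := by
    rw [transpose_add, transpose_mul, transpose_mul, hP.eq]
  have hPinv : ∀ u, x ⬝ᵥ P⁻¹ *ᵥ u = P⁻¹ *ᵥ x ⬝ᵥ u := fun u => by
    rw [← dotProduct_transpose_mulVec, hP.inv.eq, dotProduct_comm]
  have hz := h (P⁻¹ *ᵥ x) w v
  rw [h₁, h₃, add_mulVec, dotProduct_add, dotProduct_transpose_mulVec,
    dotProduct_transpose_mulVec, dotProduct_transpose_mulVec, mulVec_mulVec, mulVec_mulVec,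
    hM, hN] at hz
  rw [hPinv]
  simp only [dotProduct_add, add_dotProduct, dotProduct_comm v] at hz ⊢
  linear_combination hz

theorem dotProduct_self_le_of_forall_quadratic_nonpos {ι : Type*} [Fintype ι] {γ a : ℝ}
    (hγ : 0 < γ) {y : ι → ℝ} (h : ∀ v, a + 2 * (y ⬝ᵥ v) - γ * (v ⬝ᵥ v) ≤ 0) :
    y ⬝ᵥ y ≤ -(γ * a) := by
  have hv := mul_nonpos_of_nonneg_of_nonpos hγ.le (h (γ⁻¹ • y))
  have hexpand : γ * (a + 2 * (y ⬝ᵥ γ⁻¹ • y) - γ * (γ⁻¹ • y ⬝ᵥ γ⁻¹ • y)) = γ * a + y ⬝ᵥ y := by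
    simp only [dotProduct_smul, smul_dotProduct, smul_eq_mul]
    field_simp
    ring
  linarith

theorem SynthesisLMI.dissipation (h : SynthesisLMI A B₁ B₂ C₁ D₁ D₂ γ P Z) (hP : P.IsSymm)
    (hPdet : IsUnit P.det) (hγ : 0 < γ) (x : n → ℝ) (w : m → ℝ) :
    ((C₁ + D₂ * (Z * P⁻¹)) *ᵥ x + D₁ *ᵥ w) ⬝ᵥ ((C₁ + D₂ * (Z * P⁻¹)) *ᵥ x + D₁ *ᵥ w)
      + γ * (2 * (x ⬝ᵥ P⁻¹ *ᵥ ((A + B₂ * (Z * P⁻¹)) *ᵥ x + B₁ *ᵥ w)))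
      ≤ γ ^ 2 * (w ⬝ᵥ w) := by
  have hsq := dotProduct_self_le_of_forall_quadratic_nonpos hγ
    (a := 2 * (x ⬝ᵥ P⁻¹ *ᵥ ((A + B₂ * (Z * P⁻¹)) *ᵥ x + B₁ *ᵥ w)) - γ * (w ⬝ᵥ w))
    fun v => by linear_combination h.closedLoop_nonpos hP hPdet x w v
  linear_combination hsq

end SynthesisLMI

/-- full-state feedback controller synthesis LMI, sufficiency.
If `P > 0` and `Z` satisfy the synthesis LMI (expressed through its quadratic form,
negative semidefiniteness of the 3×3 block matrix), then with `K = Z P⁻¹` every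
closed-loop trajectory with zero initial condition satisfies the `L₂`-gain bound
`∫‖y‖² ≤ γ² ∫‖w‖²`. -/
theorem hinf_synthesis_LMI_ODE
    {n m p q : ℕ}
    (A : Matrix (Fin n) (Fin n) ℝ) (B₁ : Matrix (Fin n) (Fin m) ℝ)
    (B₂ : Matrix (Fin n) (Fin p) ℝ) (C₁ : Matrix (Fin q) (Fin n) ℝ)
    (D₁ : Matrix (Fin q) (Fin m) ℝ) (D₂ : Matrix (Fin q) (Fin p) ℝ)
    (γ : ℝ) (hγ : 0 < γ)
    (P : Matrix (Fin n) (Fin n) ℝ) (Z : Matrix (Fin p) (Fin n) ℝ)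
    (hP : P.PosDef)
    -- negative semidefiniteness of the block matrix
    -- [[PAᵀ+AP+ZᵀB₂ᵀ+B₂Z, B₁, PC₁ᵀ+ZᵀD₂ᵀ],[B₁ᵀ,−γI,D₁ᵀ],[C₁P+D₂Z,D₁,−γI]],
    -- expressed as: zᵀNz ≤ 0 for all vectors z = (z, w, v):
    (hLMI : ∀ (z : Fin n → ℝ) (w : Fin m → ℝ) (v : Fin q → ℝ),
      z ⬝ᵥ (P * Aᵀ + A * P + Zᵀ * B₂ᵀ + B₂ * Z).mulVec z
        + 2 * (z ⬝ᵥ B₁.mulVec w)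
        + 2 * (z ⬝ᵥ (P * C₁ᵀ + Zᵀ * D₂ᵀ).mulVec v)
        - γ * (w ⬝ᵥ w)
        + 2 * (w ⬝ᵥ D₁ᵀ.mulVec v)
        - γ * (v ⬝ᵥ v) ≤ 0)
    -- the feedback gain
    (K : Matrix (Fin p) (Fin n) ℝ) (hK : K = Z * P⁻¹)
    -- trajectory data
    (w : ℝ → Fin m → ℝ) (hw : ContinuousOn w (Set.Ici (0:ℝ)))
    (x : ℝ → Fin n → ℝ) (hx0 : x 0 = 0)
    (hode : ∀ t : ℝ, 0 ≤ t →
      HasDerivAt x ((A + B₂ * K).mulVec (x t) + B₁.mulVec (w t)) t)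
    (y : ℝ → Fin q → ℝ)
    (hy : ∀ t : ℝ, 0 ≤ t → y t = (C₁ + D₂ * K).mulVec (x t) + D₁.mulVec (w t)) :
    ∫⁻ t in Set.Ioi (0:ℝ), ENNReal.ofReal (∑ i, (y t i) ^ 2)
      ≤ ENNReal.ofReal (γ ^ 2) * ∫⁻ t in Set.Ioi (0:ℝ), ENNReal.ofReal (∑ i, (w t i) ^ 2) := by
  subst hK
  have hPsymm : P.IsSymm := isHermitian_iff_isSymm.mp hP.isHermitian
  have hxc : ContinuousOn x (Ici 0) := fun t ht => (hode t ht).continuousAt.continuousWithinAt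
  have hyc : ContinuousOn y (Ici 0) := ContinuousOn.congr (by fun_prop) hy
  have hself : ∀ {k : ℕ} (u : Fin k → ℝ), 0 ≤ u ⬝ᵥ u := fun u =>
    Finset.sum_nonneg fun i _ => mul_self_nonneg (u i)
  rw [← lintegral_const_mul' _ _ ENNReal.ofReal_ne_top]
  simp only [← ENNReal.ofReal_mul (sq_nonneg γ), sq (y _ _), sq (w _ _)]
  refine setLIntegral_Ioi_ofReal_le_of_dissipation (G := fun t => y t ⬝ᵥ y t)
    (S := fun t => γ ^ 2 * (w t ⬝ᵥ w t)) (V := fun t => γ * (x t ⬝ᵥ P⁻¹ *ᵥ x t))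
    (by fun_prop) (by fun_prop) (by fun_prop)
    (fun t ht => ((hode t ht).dotProduct_mulVec_self hPsymm.inv.eq).const_mul γ)
    (fun t _ => ?_) (fun t _ => hself (y t)) (fun t _ => mul_nonneg (sq_nonneg γ) (hself (w t)))
    fun t ht => ?_
  · simpa [hx0] using mul_nonneg hγ.le (hP.inv.posSemidef.dotProduct_mulVec_nonneg (x t))
  · rw [hy t ht]
    exact SynthesisLMI.dissipation hLMI hPsymm hP.det_pos.ne'.isUnit hγ (x t) (w t)
end

section
/- Let Z be a real Hilbert space, X ⊆ Z a linear subspace, U a real vector space, and let A : X → Z, B₂ : U → Z, Zc : X → U be linear maps, B₁ ∈ L(ℝ^m, Z) linear, C : X → ℝ^q linear, D₁ ∈ ℝ^{q×m}, D₂ : U → ℝ^q linear, and γ > 0. Suppose P : Z → Z is a bounded linear operator that is self-adjoint, coercive, maps X into X with P(X) = X (so that P is bijective with bounded inverse P⁻¹ and P⁻¹ maps X into X), and suppose there exists ε > 0 such that for all z ∈ X, w ∈ ℝ^m, v ∈ ℝ^q: 2⟨z, A(Pz)⟩ + 2⟨z, B₂(Zc z)⟩ + 2⟨z, B₁w⟩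 ≤ γ wᵀw − 2vᵀ(C(Pz) + D₂(Zc z) + D₁w) + γ vᵀv − ε‖z‖². Then for every continuous w : [0,∞) → ℝ^m and every continuously differentiable curve x : [0,∞) → Z with x(0) = 0, x(t) ∈ X for all t ≥ 0, and x′(t) = A x(t) + B₂(Zc(P⁻¹x(t))) + B₁ w(t) for all t ≥ 0, if the output y(t) := C x(t) + D₂(Zc(P⁻¹x(t))) + D₁ w(t) is continuous in t, then ∫₀^∞ ‖y(t)‖² dt ≤ γ² ∫₀^∞ ‖w(t)‖² dt. -/
/-!
`V(t) = ⟪x(t), P⁻¹ x(t)⟫` is a storage function. Evaluating the operator inequality at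
`z = P⁻¹ x(t)` and at the minimizing `v = γ⁻¹ y(t)` gives the dissipation inequality
`V' ≤ γ ‖w‖² - γ⁻¹ ‖y‖²`. Since `V(0) = 0` and `V ≥ 0` (`P⁻¹` is positive because `P` is),
integration yields `∫₀ᵀ ‖y‖² ≤ γ² ∫₀ᵀ ‖w‖²` for every `T`, and letting `T → ∞` gives the bound.
-/

open RealInnerProductSpace MeasureTheory Matrix

open Set

section StorageFunction

variable {Z : Type*} [NormedAddCommGroup Z] [InnerProductSpace ℝ Z]

theorem inner_map_symm_of_rightInverse {P Q : Z → Z} (hP : ∀ a b, ⟪P a, b⟫ = ⟪a, P b⟫)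
    (hPQ : Function.RightInverse Q P) (a b : Z) : ⟪Q a, b⟫ = ⟪a, Q b⟫ := by
  calc ⟪Q a, b⟫ = ⟪Q a, P (Q b)⟫ := by rw [hPQ b]
    _ = ⟪a, Q b⟫ := by rw [← hP, hPQ a]

theorem inner_self_map_nonneg_of_rightInverse {P Q : Z → Z} (hP : ∀ z, 0 ≤ ⟪z, P z⟫)
    (hPQ : Function.RightInverse Q P) (z : Z) : 0 ≤ ⟪z, Q z⟫ := by
  simpa [hPQ z, real_inner_comm] using hP (Q z)

theorem HasDerivAt.inner_self_map {Q : Z →L[ℝ] Z} (hQ : ∀ a b, ⟪Q a, b⟫ = ⟪a, Q b⟫)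
    {x : ℝ → Z} {x' : Z} {t : ℝ} (hx : HasDerivAt x x' t) :
    HasDerivAt (fun s => ⟪x s, Q (x s)⟫) (2 * ⟪Q (x t), x'⟫) t := by
  refine (hx.inner ℝ (Q.hasFDerivAt.comp_hasDerivAt t hx)).congr_deriv ?_
  rw [Function.comp_apply, ← hQ, real_inner_comm x']
  ring

end StorageFunction

theorem dotProduct_self_eq_sum_sq {ι : Type*} [Fintype ι] (v : ι → ℝ) :
    v ⬝ᵥ v = ∑ i, v i ^ 2 := by
  simp only [dotProduct, sq]

theorem le_sub_inv_mul_dotProduct_self_of_forall {ι : Type*} [Fintype ι] {γ a s : ℝ}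
    (hγ : 0 < γ) {y : ι → ℝ} (h : ∀ v : ι → ℝ, s ≤ a - 2 * (v ⬝ᵥ y) + γ * (v ⬝ᵥ v)) :
    s ≤ a - γ⁻¹ * (y ⬝ᵥ y) := by
  have hv := h (γ⁻¹ • y)
  simp only [smul_dotProduct, dotProduct_smul, smul_eq_mul] at hv
  have : γ * (γ⁻¹ * (γ⁻¹ * (y ⬝ᵥ y))) = γ⁻¹ * (y ⬝ᵥ y) := by field_simp
  linarith

theorem integral_le_sq_mul_integral_of_dissipation {V V' f g : ℝ → ℝ} {γ a b : ℝ} (hγ : 0 < γ)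
    (hab : a ≤ b) (hVab : V a ≤ V b) (hf : ContinuousOn f (Icc a b)) (hg : ContinuousOn g (Icc a b))
    (hV : ∀ t ∈ Icc a b, HasDerivAt V (V' t) t) (hV' : ∀ t ∈ Ioo a b, V' t ≤ γ * g t - γ⁻¹ * f t) :
    ∫ t in a..b, f t ≤ γ ^ 2 * ∫ t in a..b, g t := by
  have hstorage := intervalIntegral.sub_le_integral_of_hasDeriv_right_of_le hab
    (fun t ht => (hV t ht).continuousAt.continuousWithinAt)
    (fun t ht => (hV t (Ioo_subset_Icc_self ht)).hasDerivWithinAt)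
    (by fun_prop : ContinuousOn (fun t => γ * g t - γ⁻¹ * f t) (Icc a b)).integrableOn_Icc hV'
  rw [intervalIntegral.integral_sub ((hg.intervalIntegrable_of_Icc hab).const_mul γ)
      ((hf.intervalIntegrable_of_Icc hab).const_mul γ⁻¹),
    intervalIntegral.integral_const_mul, intervalIntegral.integral_const_mul] at hstorage
  have hbound : γ⁻¹ * ∫ t in a..b, f t ≤ γ * ∫ t in a..b, g t := by linarith
  rw [inv_mul_le_iff₀ hγ] at hbound
  linarith

theorem lintegral_Ioi_le_of_forall_Ioc_le {f g : ℝ → ENNReal} {a : ℝ} {c : ENNReal}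
    (h : ∀ T, a ≤ T → ∫⁻ t in Ioc a T, f t ≤ c * ∫⁻ t in Ioc a T, g t) :
    ∫⁻ t in Ioi a, f t ≤ c * ∫⁻ t in Ioi a, g t := by
  have hunion : ⋃ n : ℕ, Ioc a (a + n) = Ioi a :=
    iUnion_Ioc_eq_Ioi_self_iff.2 fun x _ => ⟨⌈x - a⌉₊, by linarith [Nat.le_ceil (x - a)]⟩
  have hdir : Directed (· ⊆ ·) fun n : ℕ => Ioc a (a + n) :=
    Monotone.directed_le fun m n hmn => Ioc_subset_Ioc_right (by gcongr)
  rw [← hunion, setLIntegral_iUnion_of_directed _ hdir, setLIntegral_iUnion_of_directed _ hdir]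
  refine iSup_le fun n => (h _ (by simp)).trans ?_
  gcongr
  exact le_iSup (fun n : ℕ => ∫⁻ t in Ioc a (a + n), g t) n

theorem setLIntegral_Ioc_ofReal_eq_intervalIntegral {f : ℝ → ℝ} {a b : ℝ}
    (hf : ContinuousOn f (Icc a b)) (hf₀ : ∀ t, 0 ≤ f t) (hab : a ≤ b) :
    ∫⁻ t in Ioc a b, ENNReal.ofReal (f t) = ENNReal.ofReal (∫ t in a..b, f t) := by
  rw [intervalIntegral.integral_of_le hab, ofReal_integral_eq_lintegral_ofReal
    (hf.integrableOn_Icc.mono_set Ioc_subset_Icc_self) (ae_of_all _ hf₀)]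

theorem lintegral_Ioi_ofReal_le_of_forall_intervalIntegral_le {f g : ℝ → ℝ} {a c : ℝ}
    (hf : ContinuousOn f (Ici a)) (hg : ContinuousOn g (Ici a))
    (hf₀ : ∀ t, 0 ≤ f t) (hg₀ : ∀ t, 0 ≤ g t) (hc : 0 ≤ c)
    (h : ∀ T, a ≤ T → ∫ t in a..T, f t ≤ c * ∫ t in a..T, g t) :
    ∫⁻ t in Ioi a, ENNReal.ofReal (f t) ≤
      ENNReal.ofReal c * ∫⁻ t in Ioi a, ENNReal.ofReal (g t) := by
  refine lintegral_Ioi_le_of_forall_Ioc_le fun T hT => ?_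
  rw [setLIntegral_Ioc_ofReal_eq_intervalIntegral (hf.mono Icc_subset_Ici_self) hf₀ hT,
    setLIntegral_Ioc_ofReal_eq_intervalIntegral (hg.mono Icc_subset_Ici_self) hg₀ hT,
    ← ENNReal.ofReal_mul hc]
  exact ENNReal.ofReal_le_ofReal (h T hT)

theorem hinf_synthesis_DPS_general
    {Z : Type*} [NormedAddCommGroup Z] [InnerProductSpace ℝ Z] [CompleteSpace Z]
    {U : Type*} [AddCommGroup U] [Module ℝ U]
    {m q : ℕ}
    (X : Submodule ℝ Z)
    (A : X →ₗ[ℝ] Z) (B₂ : U →ₗ[ℝ] Z) (Zc : X →ₗ[ℝ] U)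
    (B₁ : (Fin m → ℝ) →ₗ[ℝ] Z) (C : X →ₗ[ℝ] (Fin q → ℝ))
    (D₁ : Matrix (Fin q) (Fin m) ℝ) (D₂ : U →ₗ[ℝ] (Fin q → ℝ))
    (γ : ℝ) (hγ : 0 < γ)
    -- P bounded, self-adjoint, coercive, maps X into X with P(X) = X
    (P : Z →L[ℝ] Z)
    (hPsa : ∀ x y : Z, ⟪P x, y⟫ = ⟪x, P y⟫)
    (hPcoer : ∃ c > (0:ℝ), ∀ x : Z, c * ‖x‖ ^ 2 ≤ ⟪x, P x⟫)
    (hPX : ∀ x ∈ X, P x ∈ X)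
    -- (so that P is bijective with bounded inverse P⁻¹ mapping X into X)
    (Pinv : Z →L[ℝ] Z)
    (hPinv₁ : ∀ x : Z, P (Pinv x) = x)
    (hPinvX : ∀ x ∈ X, Pinv x ∈ X)
    -- the operator inequality
    (ε : ℝ) (hε : 0 < ε)
    (hineq : ∀ (z : X) (w : Fin m → ℝ) (v : Fin q → ℝ),
      2 * ⟪(z : Z), A ⟨P z, hPX z z.2⟩⟫ + 2 * ⟪(z : Z), B₂ (Zc z)⟫ + 2 * ⟪(z : Z), B₁ w⟫
        ≤ γ * (w ⬝ᵥ w)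
          - 2 * (v ⬝ᵥ (C ⟨P z, hPX z z.2⟩ + D₂ (Zc z) + D₁.mulVec w))
          + γ * (v ⬝ᵥ v) - ε * ‖(z : Z)‖ ^ 2)
    -- closed-loop trajectory
    (w : ℝ → Fin m → ℝ) (hw : ContinuousOn w (Set.Ici (0:ℝ)))
    (x : ℝ → Z) (hx0 : x 0 = 0)
    (hxX : ∀ t : ℝ, 0 ≤ t → x t ∈ X)
    (hode : ∀ t (ht : 0 ≤ t),
      HasDerivAt x
        (A ⟨x t, hxX t ht⟩ + B₂ (Zc ⟨Pinv (x t), hPinvX _ (hxX t ht)⟩) + B₁ (w t)) t)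
    (y : ℝ → Fin q → ℝ)
    (hy : ∀ t (ht : 0 ≤ t),
      y t = C ⟨x t, hxX t ht⟩ + D₂ (Zc ⟨Pinv (x t), hPinvX _ (hxX t ht)⟩) + D₁.mulVec (w t))
    (hycont : ContinuousOn y (Set.Ici (0:ℝ))) :
    ∫⁻ t in Set.Ioi (0:ℝ), ENNReal.ofReal (∑ i, (y t i) ^ 2)
      ≤ ENNReal.ofReal (γ ^ 2) * ∫⁻ t in Set.Ioi (0:ℝ), ENNReal.ofReal (∑ i, (w t i) ^ 2) := by
  obtain ⟨c, hc, hcoer⟩ := hPcoer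
  have hPinv_symm := inner_map_symm_of_rightInverse hPsa hPinv₁
  have hPinv_nonneg := inner_self_map_nonneg_of_rightInverse
    (fun z => (mul_nonneg hc.le (sq_nonneg ‖z‖)).trans (hcoer z)) hPinv₁
  set V : ℝ → ℝ := fun t => ⟪x t, Pinv (x t)⟫
  have hsupply : ∀ t, 0 ≤ t → HasDerivAt V (deriv V t) t ∧
      deriv V t ≤ γ * ∑ i, w t i ^ 2 - γ⁻¹ * ∑ i, y t i ^ 2 := by
    intro t ht
    have hV := (hode t ht).inner_self_map hPinv_symm
    rw [hV.deriv, ← dotProduct_self_eq_sum_sq, ← dotProduct_self_eq_sum_sq]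
    refine ⟨hV, le_sub_inv_mul_dotProduct_self_of_forall hγ fun v => ?_⟩
    have h := hineq ⟨Pinv (x t), hPinvX _ (hxX t ht)⟩ (w t) v
    simp only [hPinv₁, ← hy t ht, inner_add_right] at h ⊢
    linarith [mul_nonneg hε.le (sq_nonneg ‖Pinv (x t)‖)]
  have hyy : ContinuousOn (fun t => ∑ i, y t i ^ 2) (Ici 0) := by fun_prop
  have hww : ContinuousOn (fun t => ∑ i, w t i ^ 2) (Ici 0) := by fun_prop
  exact lintegral_Ioi_ofReal_le_of_forall_intervalIntegral_le hyy hww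
    (fun t => by positivity) (fun t => by positivity) (sq_nonneg γ) fun T hT =>
      integral_le_sq_mul_integral_of_dissipation hγ hT
        (by simpa [V, hx0] using hPinv_nonneg (x T))
        (hyy.mono Icc_subset_Ici_self) (hww.mono Icc_subset_Ici_self)
        (fun t ht => (hsupply t ht.1).1) (fun t ht => (hsupply t ht.1.le).2)

/-- Theorem 2: convex formulation of `H∞` state-feedback synthesis for
distributed-parameter systems. Under the operator inequality, closed-loop trajectories
of the distributed-parameter system satisfy the `L₂`-gain bound. -/
theorem hinf_synthesis_DPS
    {Z : Type*} [NormedAddCommGroup Z] [InnerProductSpace ℝ Z] [CompleteSpace Z]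
    {U : Type*} [AddCommGroup U] [Module ℝ U]
    {m q : ℕ}
    (X : Submodule ℝ Z)
    (A : X →ₗ[ℝ] Z) (B₂ : U →ₗ[ℝ] Z) (Zc : X →ₗ[ℝ] U)
    (B₁ : (Fin m → ℝ) →ₗ[ℝ] Z) (C : X →ₗ[ℝ] (Fin q → ℝ))
    (D₁ : Matrix (Fin q) (Fin m) ℝ) (D₂ : U →ₗ[ℝ] (Fin q → ℝ))
    (γ : ℝ) (hγ : 0 < γ)
    -- P bounded, self-adjoint, coercive, maps X into X with P(X) = X
    (P : Z →L[ℝ] Z)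
    (hPsa : ∀ x y : Z, ⟪P x, y⟫ = ⟪x, P y⟫)
    (hPcoer : ∃ c > (0:ℝ), ∀ x : Z, c * ‖x‖ ^ 2 ≤ ⟪x, P x⟫)
    (hPX : ∀ x ∈ X, P x ∈ X)
    (hPimg : P '' (X : Set Z) = (X : Set Z))
    -- (so that P is bijective with bounded inverse P⁻¹ mapping X into X)
    (Pinv : Z →L[ℝ] Z)
    (hPinv₁ : ∀ x : Z, P (Pinv x) = x) (hPinv₂ : ∀ x : Z, Pinv (P x) = x)
    (hPinvX : ∀ x ∈ X, Pinv x ∈ X)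
    -- the operator inequality
    (ε : ℝ) (hε : 0 < ε)
    (hineq : ∀ (z : X) (w : Fin m → ℝ) (v : Fin q → ℝ),
      2 * ⟪(z : Z), A ⟨P z, hPX z z.2⟩⟫ + 2 * ⟪(z : Z), B₂ (Zc z)⟫ + 2 * ⟪(z : Z), B₁ w⟫
        ≤ γ * (w ⬝ᵥ w)
          - 2 * (v ⬝ᵥ (C ⟨P z, hPX z z.2⟩ + D₂ (Zc z) + D₁.mulVec w))
          + γ * (v ⬝ᵥ v) - ε * ‖(z : Z)‖ ^ 2)
    -- closed-loop trajectory
    (w : ℝ → Fin m → ℝ) (hw : ContinuousOn w (Set.Ici (0:ℝ)))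
    (x : ℝ → Z) (hx0 : x 0 = 0)
    (hxX : ∀ t : ℝ, 0 ≤ t → x t ∈ X)
    (hode : ∀ t (ht : 0 ≤ t),
      HasDerivAt x
        (A ⟨x t, hxX t ht⟩ + B₂ (Zc ⟨Pinv (x t), hPinvX _ (hxX t ht)⟩) + B₁ (w t)) t)
    (y : ℝ → Fin q → ℝ)
    (hy : ∀ t (ht : 0 ≤ t),
      y t = C ⟨x t, hxX t ht⟩ + D₂ (Zc ⟨Pinv (x t), hPinvX _ (hxX t ht)⟩) + D₁.mulVec (w t))
    (hycont : ContinuousOn y (Set.Ici (0:ℝ))) :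
    ∫⁻ t in Set.Ioi (0:ℝ), ENNReal.ofReal (∑ i, (y t i) ^ 2)
      ≤ ENNReal.ofReal (γ ^ 2) * ∫⁻ t in Set.Ioi (0:ℝ), ENNReal.ofReal (∑ i, (w t i) ^ 2) :=
  hinf_synthesis_DPS_general X A B₂ Zc B₁ C D₁ D₂ γ hγ P hPsa hPcoer hPX Pinv hPinv₁ hPinvX ε hε
    hineq w hw x hx0 hxX hode y hy hycont
end

section
/- Under the hypotheses of the preceding setup (P bounded, self-adjoint, coercive, P(X) = X, P⁻¹ maps X into X, and the quadratic inequality with constant ε > 0 holding for all z ∈ X, w ∈ ℝ^m, v ∈ ℝ^q), let w : [0,∞) → ℝ^m be continuous and x : [0,∞) → Z be a continuously differentiable curve with x(t) ∈ X and x′(t) = A x(t) + B₂(Zc(P⁻¹x(t))) + B₁ w(t) for all t ≥ 0, and set y(t) := C x(t) + D₂(Zc(P⁻¹x(t))) + D₁ w(t). Then the storage function V(t) := ⟨x(t), P⁻¹x(t)⟩ is differentiable and satisfies, for every t ≥ 0, V′(t) ≤ γ ‖w(t)‖² − (1/γ) ‖y(t)‖² − ε ‖P⁻¹x(t)‖².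 -/
open RealInnerProductSpace MeasureTheory Matrix

/-- derivative bound on the storage function in the proof of Theorem 2.
Under the operator inequality, the storage function `V(t) = ⟪x(t), P⁻¹x(t)⟫` is
differentiable along closed-loop trajectories and satisfies
`V′(t) ≤ γ‖w(t)‖² − (1/γ)‖y(t)‖² − ε‖P⁻¹x(t)‖²` for all `t ≥ 0`. -/
theorem storage_function_derivative_bound
    {Z : Type*} [NormedAddCommGroup Z] [InnerProductSpace ℝ Z] [CompleteSpace Z]
    {U : Type*} [AddCommGroup U] [Module ℝ U]
    {m q : ℕ}
    (X : Submodule ℝ Z)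
    (A : X →ₗ[ℝ] Z) (B₂ : U →ₗ[ℝ] Z) (Zc : X →ₗ[ℝ] U)
    (B₁ : (Fin m → ℝ) →ₗ[ℝ] Z) (C : X →ₗ[ℝ] (Fin q → ℝ))
    (D₁ : Matrix (Fin q) (Fin m) ℝ) (D₂ : U →ₗ[ℝ] (Fin q → ℝ))
    (γ : ℝ) (hγ : 0 < γ)
    -- P bounded, self-adjoint, coercive, maps X into X with P(X) = X
    (P : Z →L[ℝ] Z)
    (hPsa : ∀ x y : Z, ⟪P x, y⟫ = ⟪x, P y⟫)
    (hPcoer : ∃ c > (0:ℝ), ∀ x : Z, c * ‖x‖ ^ 2 ≤ ⟪x, P x⟫)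
    (hPX : ∀ x ∈ X, P x ∈ X)
    (hPimg : P '' (X : Set Z) = (X : Set Z))
    -- P⁻¹, bounded, mapping X into X
    (Pinv : Z →L[ℝ] Z)
    (hPinv₁ : ∀ x : Z, P (Pinv x) = x) (hPinv₂ : ∀ x : Z, Pinv (P x) = x)
    (hPinvX : ∀ x ∈ X, Pinv x ∈ X)
    -- the quadratic (operator) inequality with constant ε > 0
    (ε : ℝ) (hε : 0 < ε)
    (hineq : ∀ (z : X) (w : Fin m → ℝ) (v : Fin q → ℝ),
      2 * ⟪(z : Z), A ⟨P z, hPX z z.2⟩⟫ + 2 * ⟪(z : Z), B₂ (Zc z)⟫ + 2 * ⟪(z : Z), B₁ w⟫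
        ≤ γ * (w ⬝ᵥ w)
          - 2 * (v ⬝ᵥ (C ⟨P z, hPX z z.2⟩ + D₂ (Zc z) + D₁.mulVec w))
          + γ * (v ⬝ᵥ v) - ε * ‖(z : Z)‖ ^ 2)
    -- closed-loop trajectory
    (w : ℝ → Fin m → ℝ) (hw : ContinuousOn w (Set.Ici (0:ℝ)))
    (x : ℝ → Z)
    (hxX : ∀ t : ℝ, 0 ≤ t → x t ∈ X)
    (hode : ∀ t (ht : 0 ≤ t),
      HasDerivAt x
        (A ⟨x t, hxX t ht⟩ + B₂ (Zc ⟨Pinv (x t), hPinvX _ (hxX t ht)⟩) + B₁ (w t)) t)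
    (y : ℝ → Fin q → ℝ)
    (hy : ∀ t (ht : 0 ≤ t),
      y t = C ⟨x t, hxX t ht⟩ + D₂ (Zc ⟨Pinv (x t), hPinvX _ (hxX t ht)⟩) + D₁.mulVec (w t)) :
    ∀ t : ℝ, 0 ≤ t →
      ∃ V' : ℝ,
        HasDerivAt (fun s => ⟪x s, Pinv (x s)⟫) V' t ∧
        V' ≤ γ * (∑ i, (w t i) ^ 2) - (1 / γ) * (∑ i, (y t i) ^ 2)
              - ε * ‖Pinv (x t)‖ ^ 2 := by
  intro t ht
  have hzX : Pinv (x t) ∈ X := hPinvX _ (hxX t ht)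
  set z : X := ⟨Pinv (x t), hzX⟩ with hzdef
  set x' : Z := A ⟨x t, hxX t ht⟩ + B₂ (Zc ⟨Pinv (x t), hPinvX _ (hxX t ht)⟩) + B₁ (w t)
    with hx'def
  have hx := hode t ht
  have hPinvd : HasDerivAt (fun s => Pinv (x s)) (Pinv x') t :=
    Pinv.hasFDerivAt.comp_hasDerivAt t hx
  have hV : HasDerivAt (fun s => ⟪x s, Pinv (x s)⟫)
      (⟪x t, Pinv x'⟫ + ⟪x', Pinv (x t)⟫) t := hx.inner ℝ hPinvd
  refine ⟨_, hV, ?_⟩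
  have hPinvsa : ∀ a b : Z, ⟪a, Pinv b⟫ = ⟪Pinv a, b⟫ := by
    intro a b
    conv_lhs => rw [← hPinv₁ a]
    rw [hPsa, hPinv₁]
  have hder : ⟪x t, Pinv x'⟫ + ⟪x', Pinv (x t)⟫ = 2 * ⟪Pinv (x t), x'⟫ := by
    rw [hPinvsa, real_inner_comm (x' : Z) (Pinv (x t))]
    ring
  rw [hder]
  -- apply the operator inequality at z, w t, v = γ⁻¹ • y t
  have key := hineq z (w t) (γ⁻¹ • y t)
  have hPz : (⟨P (z : Z), hPX z z.2⟩ : X) = ⟨x t, hxX t ht⟩ := by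
    apply Subtype.ext
    simp [hzdef, hPinv₁]
  rw [hPz] at key
  have hzz : (z : X) = ⟨Pinv (x t), hPinvX _ (hxX t ht)⟩ := rfl
  have hyt : (C ⟨x t, hxX t ht⟩ + D₂ (Zc z) + D₁.mulVec (w t)) = y t := by
    rw [hy t ht, hzz]
  rw [hyt] at key
  have hexp : 2 * ⟪Pinv (x t), x'⟫
      = 2 * ⟪(z : Z), A ⟨x t, hxX t ht⟩⟫ + 2 * ⟪(z : Z), B₂ (Zc z)⟫
        + 2 * ⟪(z : Z), B₁ (w t)⟫ := by
    rw [hx'def]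
    simp [inner_add_right, hzz]
    ring
  rw [hexp]
  refine key.trans (le_of_eq ?_)
  have hww : (w t) ⬝ᵥ (w t) = ∑ i, (w t i) ^ 2 := by
    simp [dotProduct, pow_two]
  have hyy : (y t) ⬝ᵥ (y t) = ∑ i, (y t i) ^ 2 := by
    simp [dotProduct, pow_two]
  have h1 : (γ⁻¹ • y t) ⬝ᵥ (y t) = γ⁻¹ * ∑ i, (y t i) ^ 2 := by
    rw [smul_dotProduct, hyy]; rfl
  have h2 : (γ⁻¹ • y t) ⬝ᵥ (γ⁻¹ • y t) = γ⁻¹ * (γ⁻¹ * ∑ i, (y t i) ^ 2) := by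
    rw [smul_dotProduct, dotProduct_smul, hyy]; rfl
  rw [hww, h1, h2]
  have hz : ((z : Z)) = Pinv (x t) := rfl
  rw [hz]
  field_simp
  ring
end

section
/- Fix K ≥ 1 and delays 0 < τ₁ ≤ … ≤ τ_K. Let Z₀, Z₁ᵢ ∈ ℝ^{p×n} and Z₂ᵢ : [−τ_i,0] → ℝ^{p×n} continuous, and define Zc : ℝⁿ × ∏_i C([−τ_i,0];ℝⁿ) → ℝ^p by Zc(x,φ) := Z₀x + Σ_i Z₁ᵢ φ_i(−τ_i) + Σ_i ∫_{−τ_i}^0 Z₂ᵢ(s) φ_i(s) ds. Let P̂ ∈ ℝ^{n×n} and let Q̂_i : [−τ_i,0] → ℝ^{n×n}, Ŝ_i : [−τ_i,0] → ℝ^{n×n}, R̂_ij : [−τ_i,0]×[−τ_j,0] → ℝ^{n×n} be continuous, and define the operator P̂_op by: first component P̂ x + (1/τ_K) Σ_i ∫_{−τ_i}^0 Q̂_i(s)φ_i(s) ds; i-th function component at s: Q̂_i(s)ᵀ x + (1/τ_K) Ŝ_i(s)φ_i(s) + (1/τ_K) Σ_j ∫_{−τ_j}^0 R̂_ij(s,θ)φ_j(θ)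 dθ. Then for every x ∈ ℝⁿ and every tuple of continuous functions φ_i : [−τ_i,0] → ℝⁿ, Zc(P̂_op(x,φ)) = K₀ x + Σ_i K₁ᵢ φ_i(−τ_i) + Σ_i ∫_{−τ_i}^0 K₂ᵢ(s) φ_i(s) ds, where K₀ = Z₀P̂ + Σ_j ( Z₁ⱼ Q̂_j(−τ_j)ᵀ + ∫_{−τ_j}^0 Z₂ⱼ(s) Q̂_j(s)ᵀ ds ), K₁ᵢ = (1/τ_K) Z₁ᵢ Ŝ_i(−τ_i), and K₂ᵢ(s) = (1/τ_K)( Z₀ Q̂_i(s) + Z₂ᵢ(s) Ŝ_i(s) + Σ_j ( Z₁ⱼ R̂_ji(−τ_j,s) + ∫_{−τ_j}^0 Z₂ⱼ(θ) R̂_ji(θ,s) dθ ) ). -/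
/-!
Both sides are linear in `(x, φ)`. The factors `τ_K` built into `Pop` cancel against the
rescalings of `Q̂, Ŝ, R̂`, so that
`𝒫̂(x, φ) = (P̂ x, Q̂ᵢ(·)ᵀ x) + τ_K⁻¹ (Σᵢ ∫ Q̂ᵢ φᵢ, Ŝᵢ φᵢ + Σⱼ ∫ R̂ᵢⱼ(·, θ) φⱼ(θ) dθ)`.
Applying `Zc` to the first part gives `K₀ x` at once, and in the second part every term is
already of the form `K₁ᵢ φᵢ(−τᵢ)` or `∫ K₂ᵢ φᵢ` except those containing `R̂`. For these one
moves `Z₁ᵢ` and `Z₂ᵢ(s)` inside the `θ`-integrals, swaps the order of integration on the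
rectangles `[−τᵢ, 0] × [−τⱼ, 0]` (Fubini, legitimate because everything is continuous on
compact sets) and exchanges the roles of `i` and `j`: the result is the `R̂`-part of `K₂ᵢ`.
-/

open MeasureTheory Matrix

noncomputable section

/-- Entrywise integral of a matrix-valued function over a set of reals. -/
def mIntOn {α β : Type*} (A : Set ℝ) (f : ℝ → Matrix α β ℝ) : Matrix α β ℝ :=
  Matrix.of fun k l => ∫ s in A, f s k l

/-- The inner product of the space `Z_{α,β,κ}` (the Hilbert space
`ℝ^α × ∏_{i ∈ κ} L²([−τᵢ,0];ℝ^β)`), on the representation by genuine functions: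
`⟨(y,ψ),(x,φ)⟩ = τ_K yᵀx + Σ_i ∫_{−τ_i}^0 ψ_i(s)ᵀφ_i(s) ds`. -/
def innerZ {κ α β : Type*} [Fintype κ] [Fintype α] [Fintype β]
    (τmax : ℝ) (τ : κ → ℝ)
    (x y : (α → ℝ) × (κ → ℝ → β → ℝ)) : ℝ :=
  τmax * (x.1 ⬝ᵥ y.1) +
    ∑ i, ∫ s in Set.Icc (-(τ i)) 0, (x.2 i s) ⬝ᵥ (y.2 i s)

/-- Membership in `Z_{α,β,κ}`: each function component is square integrable on its
interval `[−τᵢ,0]`. -/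
def memZ {κ α β : Type*} [Fintype κ] [Fintype β]
    (τ : κ → ℝ) (x : (α → ℝ) × (κ → ℝ → β → ℝ)) : Prop :=
  ∀ i, MemLp (x.2 i) 2 (volume.restrict (Set.Icc (-(τ i)) 0))

/-- Membership in the state space `X ⊆ Z_{n,K}`: each `φᵢ` lies in `W^{1,2}([−τᵢ,0];ℝⁿ)`
(absolutely continuous with square-integrable derivative) and `φᵢ(0) = x`. -/
def memX {κ : Type*} [Fintype κ] {n : ℕ}
    (τ : κ → ℝ) (x : (Fin n → ℝ) × (κ → ℝ → Fin n → ℝ)) : Prop :=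
  memZ τ x ∧ ∀ i, x.2 i 0 = x.1 ∧
    ∃ d : ℝ → Fin n → ℝ,
      MemLp d 2 (volume.restrict (Set.Icc (-(τ i)) 0)) ∧
      ∀ s ∈ Set.Icc (-(τ i)) 0, x.2 i s = x.1 - ∫ θ in Set.Ioc s 0, d θ

/-- The operator `𝒫_{P,Qᵢ,Sᵢ,Rᵢⱼ} : Z_{α,β,κ} → Z_{α,β,κ}`:
first component `P x + Σ_i ∫_{−τ_i}^0 Q_i(s)φ_i(s) ds`; `i`-th function component at `s`:
`τ_K Q_i(s)ᵀ x + τ_K S_i(s) φ_i(s) + Σ_j ∫_{−τ_j}^0 R_ij(s,θ) φ_j(θ) dθ`. -/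
def Pop {κ α β : Type*} [Fintype κ] [Fintype α] [Fintype β]
    (τmax : ℝ) (τ : κ → ℝ)
    (P : Matrix α α ℝ) (Q : κ → ℝ → Matrix α β ℝ)
    (S : κ → ℝ → Matrix β β ℝ) (R : κ → κ → ℝ → ℝ → Matrix β β ℝ)
    (x : (α → ℝ) × (κ → ℝ → β → ℝ)) : (α → ℝ) × (κ → ℝ → β → ℝ) :=
  (P.mulVec x.1 + ∑ i, ∫ s in Set.Icc (-(τ i)) 0, (Q i s).mulVec (x.2 i s),
   fun i s => τmax • ((Q i s)ᵀ.mulVec x.1) + τmax • ((S i s).mulVec (x.2 i s))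
     + ∑ j, ∫ θ in Set.Icc (-(τ j)) 0, (R i j s θ).mulVec (x.2 j θ))

end


open Set Function

section Continuity

variable {X : Type*} [TopologicalSpace X] {s : Set X} {l m n : Type*}

theorem continuousOn_matrix_iff {M : X → Matrix m n ℝ} :
    ContinuousOn M s ↔ ∀ k l, ContinuousOn (fun x => M x k l) s :=
  continuousOn_pi.trans (forall_congr' fun _ => continuousOn_pi)

variable [Fintype m]

theorem ContinuousOn.matrix_mul {A : X → Matrix l m ℝ} {B : X → Matrix m n ℝ}
    (hA : ContinuousOn A s) (hB : ContinuousOn B s) : ContinuousOn (fun x => A x * B x) s :=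
  (continuous_fst.matrix_mul continuous_snd).comp_continuousOn (hA.prodMk hB)

theorem ContinuousOn.matrix_mulVec {A : X → Matrix l m ℝ} {v : X → m → ℝ}
    (hA : ContinuousOn A s) (hv : ContinuousOn v s) : ContinuousOn (fun x => A x *ᵥ v x) s :=
  (continuous_fst.matrix_mulVec continuous_snd).comp_continuousOn (hA.prodMk hv)

end Continuity

section Integration

variable {E : Type*} [NormedAddCommGroup E] {A B : Set ℝ}

theorem ContinuousOn.parametric_setIntegral [NormedSpace ℝ E] (hA : IsCompact A) (hB : IsCompact B)
    {f : ℝ → ℝ → E} (hf : ContinuousOn (uncurry f) (A ×ˢ B)) :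
    ContinuousOn (fun x => ∫ y in B, f x y) A := by
  intro x₀ hx₀
  obtain ⟨M, hM⟩ := (hA.prod hB).exists_bound_of_continuousOn hf
  refine continuousWithinAt_of_dominated (bound := fun _ => M) ?_ ?_
    (integrableOn_const hB.measure_lt_top.ne) ?_
  · filter_upwards [self_mem_nhdsWithin] with x hx
    exact (hf.uncurry_left x hx).aestronglyMeasurable hB.measurableSet
  · filter_upwards [self_mem_nhdsWithin] with x hx
    exact (ae_restrict_iff' hB.measurableSet).2
      (.of_forall fun y hy => hM (x, y) (mk_mem_prod hx hy))
  · exact (ae_restrict_iff' hB.measurableSet).2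
      (.of_forall fun y hy => hf.uncurry_right y hy x₀ hx₀)

theorem ContinuousOn.mIntOn {m n : Type*} (hA : IsCompact A) (hB : IsCompact B)
    {M : ℝ → ℝ → Matrix m n ℝ} (hM : ContinuousOn (uncurry M) (A ×ˢ B)) :
    ContinuousOn (fun x => mIntOn B (M x)) A :=
  continuousOn_matrix_iff.2 fun k l =>
    ContinuousOn.parametric_setIntegral (f := fun x y => M x y k l) hA hB
      (continuousOn_matrix_iff.1 hM k l)

theorem integrable_prod_restrict_of_continuousOn (hA : IsCompact A) (hB : IsCompact B)
    {f : ℝ × ℝ → E} (hf : ContinuousOn f (A ×ˢ B)) :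
    Integrable f ((volume.restrict A).prod (volume.restrict B)) := by
  rw [Measure.prod_restrict]
  exact hf.integrableOn_compact (hA.prod hB)

theorem setIntegral_setIntegral_swap_of_continuousOn [NormedSpace ℝ E] [CompleteSpace E]
    (hA : IsCompact A) (hB : IsCompact B) {f : ℝ → ℝ → E} (hf : ContinuousOn (uncurry f) (A ×ˢ B)) :
    ∫ x in A, ∫ y in B, f x y = ∫ y in B, ∫ x in A, f x y :=
  integral_integral_swap (integrable_prod_restrict_of_continuousOn hA hB hf)

variable {X : Type*} [MeasurableSpace X] {μ : Measure X} {m n : Type*} [Fintype m] [Fintype n]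

theorem MeasureTheory.Integrable.const_mulVec (M : Matrix m n ℝ) {f : X → n → ℝ}
    (hf : Integrable f μ) : Integrable (fun x => M *ᵥ f x) μ :=
  (mulVecLin M).toContinuousLinearMap.integrable_comp hf

theorem Matrix.mulVec_integral (M : Matrix m n ℝ) {f : X → n → ℝ} (hf : Integrable f μ) :
    M *ᵥ ∫ x, f x ∂μ = ∫ x, M *ᵥ f x ∂μ :=
  ((mulVecLin M).toContinuousLinearMap.integral_comp_comm hf).symm

theorem mIntOn_mulVec {M : ℝ → Matrix m n ℝ} (hM : ∀ k l, IntegrableOn (fun s => M s k l) A)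
    (v : n → ℝ) : mIntOn A M *ᵥ v = ∫ s in A, M s *ᵥ v := by
  have hentry : ∀ k l, IntegrableOn (fun s => M s k l * v l) A :=
    fun k l => (hM k l).mul_const _
  have hrow : ∀ k, IntegrableOn (fun s => (M s *ᵥ v) k) A :=
    fun k => integrable_finsetSum _ fun l _ => hentry k l
  ext k
  rw [eval_integral hrow]
  simp only [mulVec, dotProduct, mIntOn, of_apply]
  rw [integral_finsetSum _ fun l _ => hentry k l]
  simp only [integral_mul_const]

end Integration

section KernelTransposition

variable {κ : Type*} [Fintype κ] {I : κ → Set ℝ}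

theorem sum_mulVec_sum_setIntegral {m n : Type*} [Fintype m] [Fintype n] (M : κ → Matrix m n ℝ)
    {F : κ → κ → ℝ → n → ℝ} (hF : ∀ i j, IntegrableOn (F i j) (I j)) :
    ∑ i, M i *ᵥ ∑ j, ∫ θ in I j, F i j θ = ∑ i, ∫ s in I i, ∑ j, M j *ᵥ F j i s := calc
  _ = ∑ i, ∑ j, ∫ θ in I j, M i *ᵥ F i j θ := Finset.sum_congr rfl fun i _ => by
      rw [mulVec_sum]; exact Finset.sum_congr rfl fun j _ => mulVec_integral _ (hF i j)
  _ = ∑ j, ∑ i, ∫ θ in I j, M i *ᵥ F i j θ := Finset.sum_comm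
  _ = _ := Finset.sum_congr rfl fun i _ =>
      (integral_finsetSum _ fun j _ => (hF j i).const_mulVec (M j)).symm

theorem sum_setIntegral_sum_setIntegral_comm {E : Type*} [NormedAddCommGroup E]
    [NormedSpace ℝ E] [CompleteSpace E] (hI : ∀ i, IsCompact (I i)) {F : κ → κ → ℝ → ℝ → E}
    (hF : ∀ i j, ContinuousOn (uncurry (F i j)) (I i ×ˢ I j)) :
    ∑ i, ∫ s in I i, ∑ j, ∫ θ in I j, F i j s θ
      = ∑ i, ∫ s in I i, ∑ j, ∫ θ in I j, F j i θ s := by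
  have hFswap : ∀ i j, ContinuousOn (uncurry fun s θ => F j i θ s) (I i ×ˢ I j) :=
    fun i j => (hF j i).comp continuous_swap.continuousOn (mapsTo_swap_prod _ _)
  calc _ = ∑ i, ∑ j, ∫ s in I i, ∫ θ in I j, F i j s θ := Finset.sum_congr rfl fun i _ =>
        integral_finsetSum _ fun j _ =>
          ((hF i j).parametric_setIntegral (hI i) (hI j)).integrableOn_compact (hI i)
    _ = ∑ i, ∑ j, ∫ θ in I j, ∫ s in I i, F i j s θ :=
        Finset.sum_congr rfl fun i _ => Finset.sum_congr rfl fun j _ =>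
          setIntegral_setIntegral_swap_of_continuousOn (hI i) (hI j) (hF i j)
    _ = _ := by
        rw [Finset.sum_comm]
        exact Finset.sum_congr rfl fun i _ => (integral_finsetSum _ fun j _ =>
          ((hFswap i j).parametric_setIntegral (hI i) (hI j)).integrableOn_compact (hI i)).symm

end KernelTransposition

section ControlOperator

variable {κ α β γ : Type*} [Fintype κ] [Fintype α] [Fintype β] [Fintype γ] (τ : κ → ℝ)

/-- The operator `Zc` of the statement. -/
noncomputable def controlOp (Z₀ : Matrix γ α ℝ) (Z₁ : κ → Matrix γ β ℝ)
    (Z₂ : κ → ℝ → Matrix γ β ℝ) (y : (α → ℝ) × (κ → ℝ → β → ℝ)) : γ → ℝ :=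
  Z₀ *ᵥ y.1 + ∑ i, Z₁ i *ᵥ y.2 i (-(τ i)) + ∑ i, ∫ s in Icc (-(τ i)) 0, Z₂ i s *ᵥ y.2 i s

theorem controlOp_add_smul {Z₀ : Matrix γ α ℝ} {Z₁ : κ → Matrix γ β ℝ}
    {Z₂ : κ → ℝ → Matrix γ β ℝ} {y y' : (α → ℝ) × (κ → ℝ → β → ℝ)} (c : ℝ)
    (hy : ∀ i, IntegrableOn (fun s => Z₂ i s *ᵥ y.2 i s) (Icc (-(τ i)) 0))
    (hy' : ∀ i, IntegrableOn (fun s => Z₂ i s *ᵥ y'.2 i s) (Icc (-(τ i)) 0)) :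
    controlOp τ Z₀ Z₁ Z₂ (y + c • y') = controlOp τ Z₀ Z₁ Z₂ y + c • controlOp τ Z₀ Z₁ Z₂ y' := by
  have hint : ∀ i, ∫ s in Icc (-(τ i)) 0, Z₂ i s *ᵥ (y + c • y').2 i s
      = (∫ s in Icc (-(τ i)) 0, Z₂ i s *ᵥ y.2 i s)
        + c • ∫ s in Icc (-(τ i)) 0, Z₂ i s *ᵥ y'.2 i s := fun i => by
    simp only [Prod.snd_add, Prod.smul_snd, Pi.add_apply, Pi.smul_apply, mulVec_add, mulVec_smul]
    rw [integral_add (g := fun s => c • (Z₂ i s *ᵥ y'.2 i s)) (hy i) ((hy' i).smul c),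
      integral_smul]
  rw [controlOp, Finset.sum_congr rfl fun i _ => hint i]
  simp only [controlOp, Prod.fst_add, Prod.smul_fst, Prod.snd_add, Prod.smul_snd, Pi.add_apply,
    Pi.smul_apply, mulVec_add, mulVec_smul, Finset.sum_add_distrib, smul_add, Finset.smul_sum]
  abel

theorem Pop_rescaled {c : ℝ} (hc : c ≠ 0) (P : Matrix α α ℝ) (Q : κ → ℝ → Matrix α β ℝ)
    (S : κ → ℝ → Matrix β β ℝ) (R : κ → κ → ℝ → ℝ → Matrix β β ℝ) (x : α → ℝ)
    (φ : κ → ℝ → β → ℝ) :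
    Pop c τ P (fun i s => c⁻¹ • Q i s) (fun i s => (c ^ 2)⁻¹ • S i s)
        (fun i j s θ => c⁻¹ • R i j s θ) (x, φ)
      = (P *ᵥ x, fun i s => (Q i s)ᵀ *ᵥ x)
        + c⁻¹ • (∑ i, ∫ s in Icc (-(τ i)) 0, Q i s *ᵥ φ i s,
          fun i s => S i s *ᵥ φ i s + ∑ j, ∫ θ in Icc (-(τ j)) 0, R i j s θ *ᵥ φ j θ) := by
  have hc2 : c * (c ^ 2)⁻¹ = c⁻¹ := by field_simp
  refine Prod.ext ?_ (funext₂ fun i s => ?_)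
  · simp [Pop, smul_mulVec, integral_smul, Finset.smul_sum]
  · simp [Pop, transpose_smul, smul_mulVec, smul_smul, hc, hc2, integral_smul, Finset.smul_sum,
      smul_add, add_assoc]

theorem controlOp_state (Z₀ : Matrix γ α ℝ) (Z₁ : κ → Matrix γ β ℝ)
    {Z₂ : κ → ℝ → Matrix γ β ℝ} {Q : κ → ℝ → Matrix α β ℝ}
    (hZQ : ∀ j k l, IntegrableOn (fun s => (Z₂ j s * (Q j s)ᵀ) k l) (Icc (-(τ j)) 0))
    (P : Matrix α α ℝ) (x : α → ℝ) :
    controlOp τ Z₀ Z₁ Z₂ (P *ᵥ x, fun i s => (Q i s)ᵀ *ᵥ x)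
      = (Z₀ * P + ∑ j, (Z₁ j * (Q j (-(τ j)))ᵀ
          + mIntOn (Icc (-(τ j)) 0) fun s => Z₂ j s * (Q j s)ᵀ)) *ᵥ x := by
  simp only [controlOp, add_mulVec, sum_mulVec, mulVec_mulVec, fun j => mIntOn_mulVec (hZQ j),
    Finset.sum_add_distrib]
  abel

end ControlOperator

/-- The `R̂`-part of the gain `K₂ᵢ(s)`, without the factor `τ_K⁻¹`. -/
noncomputable def kernelGain {κ β γ : Type*} [Fintype κ] [Fintype β] (τ : κ → ℝ)
    (Z₁ : κ → Matrix γ β ℝ) (Z₂ : κ → ℝ → Matrix γ β ℝ) (R : κ → κ → ℝ → ℝ → Matrix β β ℝ)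
    (i : κ) (s : ℝ) : Matrix γ β ℝ :=
  ∑ j, (Z₁ j * R j i (-(τ j)) s + mIntOn (Icc (-(τ j)) 0) fun θ => Z₂ j θ * R j i θ s)

section Kernel

variable {κ β γ : Type*} [Fintype κ] [Fintype β] {τ : κ → ℝ}
  {Z₂ : κ → ℝ → Matrix γ β ℝ} {R : κ → κ → ℝ → ℝ → Matrix β β ℝ} {φ : κ → ℝ → β → ℝ}

theorem continuousOn_kernelGain (hτ : ∀ i, 0 ≤ τ i) (Z₁ : κ → Matrix γ β ℝ)
    (hZ₂ : ∀ i, ContinuousOn (Z₂ i) (Icc (-(τ i)) 0))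
    (hR : ∀ i j, ContinuousOn (uncurry (R i j)) (Icc (-(τ i)) 0 ×ˢ Icc (-(τ j)) 0)) (i : κ) :
    ContinuousOn (kernelGain τ Z₁ Z₂ R i) (Icc (-(τ i)) 0) :=
  continuousOn_finsetSum _ fun j _ =>
    (continuousOn_const.matrix_mul
      ((hR j i).uncurry_left _ (left_mem_Icc.2 (neg_nonpos.2 (hτ j))))).add
      (ContinuousOn.mIntOn (M := fun s θ => Z₂ j θ * R j i θ s) isCompact_Icc isCompact_Icc
        (((hZ₂ j).comp continuousOn_snd mapsTo_snd_prod).matrix_mul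
          ((hR j i).comp continuous_swap.continuousOn (mapsTo_swap_prod _ _))))

variable [Fintype γ]

theorem continuousOn_sum_setIntegral_kernel
    (hR : ∀ i j, ContinuousOn (uncurry (R i j)) (Icc (-(τ i)) 0 ×ˢ Icc (-(τ j)) 0))
    (hφ : ∀ i, ContinuousOn (φ i) (Icc (-(τ i)) 0)) (i : κ) :
    ContinuousOn (fun s => ∑ j, ∫ θ in Icc (-(τ j)) 0, R i j s θ *ᵥ φ j θ) (Icc (-(τ i)) 0) :=
  continuousOn_finsetSum _ fun j _ =>
    ContinuousOn.parametric_setIntegral (f := fun s θ => R i j s θ *ᵥ φ j θ) isCompact_Icc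
      isCompact_Icc ((hR i j).matrix_mulVec ((hφ j).comp continuousOn_snd mapsTo_snd_prod))

theorem kernel_terms_eq_setIntegral_kernelGain (hτ : ∀ i, 0 ≤ τ i) (Z₁ : κ → Matrix γ β ℝ)
    (hZ₂ : ∀ i, ContinuousOn (Z₂ i) (Icc (-(τ i)) 0))
    (hR : ∀ i j, ContinuousOn (uncurry (R i j)) (Icc (-(τ i)) 0 ×ˢ Icc (-(τ j)) 0))
    (hφ : ∀ i, ContinuousOn (φ i) (Icc (-(τ i)) 0)) :
    (∑ i, Z₁ i *ᵥ ∑ j, ∫ θ in Icc (-(τ j)) 0, R i j (-(τ i)) θ *ᵥ φ j θ)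
      + ∑ i, ∫ s in Icc (-(τ i)) 0, Z₂ i s *ᵥ ∑ j, ∫ θ in Icc (-(τ j)) 0, R i j s θ *ᵥ φ j θ
      = ∑ i, ∫ s in Icc (-(τ i)) 0, kernelGain τ Z₁ Z₂ R i s *ᵥ φ i s := by
  have hend : ∀ i, -(τ i) ∈ Icc (-(τ i)) 0 := fun i => left_mem_Icc.2 (neg_nonpos.2 (hτ i))
  have hpair : ∀ i j, ContinuousOn (uncurry fun s θ => Z₂ i s *ᵥ (R i j s θ *ᵥ φ j θ))
      (Icc (-(τ i)) 0 ×ˢ Icc (-(τ j)) 0) := fun i j =>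
    ((hZ₂ i).comp continuousOn_fst mapsTo_fst_prod).matrix_mulVec
      ((hR i j).matrix_mulVec ((hφ j).comp continuousOn_snd mapsTo_snd_prod))
  have hinside : ∀ i,
      ∫ s in Icc (-(τ i)) 0, Z₂ i s *ᵥ ∑ j, ∫ θ in Icc (-(τ j)) 0, R i j s θ *ᵥ φ j θ
      = ∫ s in Icc (-(τ i)) 0, ∑ j, ∫ θ in Icc (-(τ j)) 0, Z₂ i s *ᵥ (R i j s θ *ᵥ φ j θ) :=
    fun i => setIntegral_congr_fun measurableSet_Icc fun s hs => by
      simp only [mulVec_sum]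
      exact Finset.sum_congr rfl fun j _ => mulVec_integral _
        (((hR i j).uncurry_left s hs).matrix_mulVec (hφ j)).integrableOn_Icc
  have hpoint : ∀ i, IntegrableOn (fun s => ∑ j, Z₁ j *ᵥ (R j i (-(τ j)) s *ᵥ φ i s))
      (Icc (-(τ i)) 0) := fun i =>
    (continuousOn_finsetSum _ fun j _ => continuousOn_const.matrix_mulVec
      (((hR j i).uncurry_left _ (hend j)).matrix_mulVec (hφ i))).integrableOn_Icc
  have hkernel : ∀ i, IntegrableOn
      (fun s => ∑ j, ∫ θ in Icc (-(τ j)) 0, Z₂ j θ *ᵥ (R j i θ s *ᵥ φ i s)) (Icc (-(τ i)) 0) :=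
    fun i => (continuousOn_finsetSum _ fun j _ =>
      ContinuousOn.parametric_setIntegral (f := fun s θ => Z₂ j θ *ᵥ (R j i θ s *ᵥ φ i s))
        isCompact_Icc isCompact_Icc
        ((hpair j i).comp continuous_swap.continuousOn (mapsTo_swap_prod _ _))).integrableOn_Icc
  rw [sum_mulVec_sum_setIntegral (I := fun j => Icc (-(τ j)) 0)
      (F := fun i j θ => R i j (-(τ i)) θ *ᵥ φ j θ) Z₁ fun i j =>
        (((hR i j).uncurry_left _ (hend i)).matrix_mulVec (hφ j)).integrableOn_Icc,
    Finset.sum_congr rfl fun i _ => hinside i,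
    sum_setIntegral_sum_setIntegral_comm (fun i => isCompact_Icc) hpair, ← Finset.sum_add_distrib]
  refine Finset.sum_congr rfl fun i _ => ?_
  rw [← integral_add (hpoint i) (hkernel i)]
  refine setIntegral_congr_fun measurableSet_Icc fun s hs => ?_
  have hentry : ∀ j k l, IntegrableOn (fun θ => (Z₂ j θ * R j i θ s) k l) (Icc (-(τ j)) 0) :=
    fun j k l => (continuousOn_matrix_iff.1
      ((hZ₂ j).matrix_mul ((hR j i).uncurry_right s hs)) k l).integrableOn_Icc
  simp only [kernelGain, sum_mulVec, add_mulVec, Finset.sum_add_distrib,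
    fun j => mIntOn_mulVec (hentry j), mulVec_mulVec]

end Kernel

section History

variable {κ α β γ : Type*} [Fintype κ] [Fintype α] [Fintype β] [Fintype γ] {τ : κ → ℝ}
  {Z₂ : κ → ℝ → Matrix γ β ℝ} {Q : κ → ℝ → Matrix α β ℝ} {S : κ → ℝ → Matrix β β ℝ}
  {R : κ → κ → ℝ → ℝ → Matrix β β ℝ} {φ : κ → ℝ → β → ℝ}

theorem controlOp_history (hτ : ∀ i, 0 ≤ τ i) (Z₀ : Matrix γ α ℝ) (Z₁ : κ → Matrix γ β ℝ)
    (hZ₂ : ∀ i, ContinuousOn (Z₂ i) (Icc (-(τ i)) 0))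
    (hQ : ∀ i, ContinuousOn (Q i) (Icc (-(τ i)) 0))
    (hS : ∀ i, ContinuousOn (S i) (Icc (-(τ i)) 0))
    (hR : ∀ i j, ContinuousOn (uncurry (R i j)) (Icc (-(τ i)) 0 ×ˢ Icc (-(τ j)) 0))
    (hφ : ∀ i, ContinuousOn (φ i) (Icc (-(τ i)) 0)) :
    controlOp τ Z₀ Z₁ Z₂ (∑ i, ∫ s in Icc (-(τ i)) 0, Q i s *ᵥ φ i s,
        fun i s => S i s *ᵥ φ i s + ∑ j, ∫ θ in Icc (-(τ j)) 0, R i j s θ *ᵥ φ j θ)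
      = ∑ i, (Z₁ i * S i (-(τ i))) *ᵥ φ i (-(τ i))
        + ∑ i, ∫ s in Icc (-(τ i)) 0,
            (Z₀ * Q i s + Z₂ i s * S i s + kernelGain τ Z₁ Z₂ R i s) *ᵥ φ i s := by
  have hkernel := continuousOn_sum_setIntegral_kernel hR hφ
  have hgain := continuousOn_kernelGain hτ Z₁ hZ₂ hR
  have hQφ : ∀ i, IntegrableOn (fun s => Q i s *ᵥ φ i s) (Icc (-(τ i)) 0) :=
    fun i => ContinuousOn.integrableOn_Icc (by fun_prop)
  have hZQφ : ∀ i, IntegrableOn (fun s => (Z₀ * Q i s) *ᵥ φ i s) (Icc (-(τ i)) 0) :=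
    fun i => ContinuousOn.integrableOn_Icc (by fun_prop)
  have hZSφ : ∀ i, IntegrableOn (fun s => (Z₂ i s * S i s) *ᵥ φ i s) (Icc (-(τ i)) 0) :=
    fun i => ContinuousOn.integrableOn_Icc (by fun_prop)
  have hsplit : ∀ i, ∫ s in Icc (-(τ i)) 0, Z₂ i s *ᵥ (S i s *ᵥ φ i s
        + ∑ j, ∫ θ in Icc (-(τ j)) 0, R i j s θ *ᵥ φ j θ)
      = (∫ s in Icc (-(τ i)) 0, (Z₂ i s * S i s) *ᵥ φ i s)
        + ∫ s in Icc (-(τ i)) 0, Z₂ i s *ᵥ ∑ j, ∫ θ in Icc (-(τ j)) 0, R i j s θ *ᵥ φ j θ :=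
    fun i => by
      simp only [mulVec_add, mulVec_mulVec]
      exact integral_add (hZSφ i) ((hZ₂ i).matrix_mulVec (hkernel i)).integrableOn_Icc
  have hsplit' : ∀ i, ∫ s in Icc (-(τ i)) 0,
        (Z₀ * Q i s + Z₂ i s * S i s + kernelGain τ Z₁ Z₂ R i s) *ᵥ φ i s
      = (∫ s in Icc (-(τ i)) 0, (Z₀ * Q i s) *ᵥ φ i s)
        + (∫ s in Icc (-(τ i)) 0, (Z₂ i s * S i s) *ᵥ φ i s)
        + ∫ s in Icc (-(τ i)) 0, kernelGain τ Z₁ Z₂ R i s *ᵥ φ i s :=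
    fun i => by
      simp only [add_mulVec]
      rw [integral_add (f := fun s => (Z₀ * Q i s) *ᵥ φ i s + (Z₂ i s * S i s) *ᵥ φ i s)
          ((hZQφ i).add (hZSφ i)) ((hgain i).matrix_mulVec (hφ i)).integrableOn_Icc,
        integral_add (hZQφ i) (hZSφ i)]
  rw [controlOp, Finset.sum_congr rfl fun i _ => hsplit i,
    Finset.sum_congr rfl fun i _ => hsplit' i]
  simp only [mulVec_add, mulVec_mulVec, Finset.sum_add_distrib]
  rw [← kernel_terms_eq_setIntegral_kernelGain hτ Z₁ hZ₂ hR hφ, mulVec_sum]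
  simp only [fun i => mulVec_integral Z₀ (hQφ i), mulVec_mulVec]
  abel

end History

theorem controller_reconstruction_general
    {K n p : ℕ} (τ : Fin (K + 1) → ℝ)
    (hτpos : ∀ i, 0 < τ i)
    (Z₀ : Matrix (Fin p) (Fin n) ℝ) (Z₁ : Fin (K + 1) → Matrix (Fin p) (Fin n) ℝ)
    (Z₂ : Fin (K + 1) → ℝ → Matrix (Fin p) (Fin n) ℝ)
    (hZ₂ : ∀ i k l, ContinuousOn (fun s => Z₂ i s k l) (Set.Icc (-(τ i)) 0))
    (Phat : Matrix (Fin n) (Fin n) ℝ)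
    (Qhat Shat : Fin (K + 1) → ℝ → Matrix (Fin n) (Fin n) ℝ)
    (Rhat : Fin (K + 1) → Fin (K + 1) → ℝ → ℝ → Matrix (Fin n) (Fin n) ℝ)
    (hQhat : ∀ i k l, ContinuousOn (fun s => Qhat i s k l) (Set.Icc (-(τ i)) 0))
    (hShat : ∀ i k l, ContinuousOn (fun s => Shat i s k l) (Set.Icc (-(τ i)) 0))
    (hRhat : ∀ i j k l, ContinuousOn (fun q : ℝ × ℝ => Rhat i j q.1 q.2 k l)
      ((Set.Icc (-(τ i)) 0) ×ˢ (Set.Icc (-(τ j)) 0)))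
    (x : Fin n → ℝ) (φ : Fin (K + 1) → ℝ → Fin n → ℝ)
    (hφ : ∀ i l, ContinuousOn (fun s => φ i s l) (Set.Icc (-(τ i)) 0))
    -- the gains
    (K₀ : Matrix (Fin p) (Fin n) ℝ) (K₁ : Fin (K + 1) → Matrix (Fin p) (Fin n) ℝ)
    (K₂ : Fin (K + 1) → ℝ → Matrix (Fin p) (Fin n) ℝ)
    (hK₀ : K₀ = Z₀ * Phat + ∑ j, (Z₁ j * (Qhat j (-(τ j)))ᵀ
      + mIntOn (Set.Icc (-(τ j)) 0) fun s => Z₂ j s * (Qhat j s)ᵀ))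
    (hK₁ : ∀ i, K₁ i = (τ (Fin.last K))⁻¹ • (Z₁ i * Shat i (-(τ i))))
    (hK₂ : ∀ i s, K₂ i s = (τ (Fin.last K))⁻¹ •
      (Z₀ * Qhat i s + Z₂ i s * Shat i s
        + ∑ j, (Z₁ j * Rhat j i (-(τ j)) s
            + mIntOn (Set.Icc (-(τ j)) 0) fun θ => Z₂ j θ * Rhat j i θ s))) :
    -- `u = 𝒵 (𝒫̂ (x,φ))` equals the gain formula
    (Z₀.mulVec (Pop (τ (Fin.last K)) τ Phat
        (fun i s => (τ (Fin.last K))⁻¹ • Qhat i s)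
        (fun i s => ((τ (Fin.last K)) ^ 2)⁻¹ • Shat i s)
        (fun i j s θ => (τ (Fin.last K))⁻¹ • Rhat i j s θ) (x, φ)).1
      + ∑ i, (Z₁ i).mulVec ((Pop (τ (Fin.last K)) τ Phat
        (fun i s => (τ (Fin.last K))⁻¹ • Qhat i s)
        (fun i s => ((τ (Fin.last K)) ^ 2)⁻¹ • Shat i s)
        (fun i j s θ => (τ (Fin.last K))⁻¹ • Rhat i j s θ) (x, φ)).2 i (-(τ i)))
      + ∑ i, ∫ s in Set.Icc (-(τ i)) 0,
          (Z₂ i s).mulVec ((Pop (τ (Fin.last K)) τ Phat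
        (fun i s => (τ (Fin.last K))⁻¹ • Qhat i s)
        (fun i s => ((τ (Fin.last K)) ^ 2)⁻¹ • Shat i s)
        (fun i j s θ => (τ (Fin.last K))⁻¹ • Rhat i j s θ) (x, φ)).2 i s))
    = K₀.mulVec x + ∑ i, (K₁ i).mulVec (φ i (-(τ i)))
        + ∑ i, ∫ s in Set.Icc (-(τ i)) 0, (K₂ i s).mulVec (φ i s) := by
  have hτ : ∀ i, 0 ≤ τ i := fun i => (hτpos i).le
  have hZ₂' := fun i => continuousOn_matrix_iff.2 (hZ₂ i)
  have hQ' := fun i => continuousOn_matrix_iff.2 (hQhat i)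
  have hS' := fun i => continuousOn_matrix_iff.2 (hShat i)
  have hR' : ∀ i j, ContinuousOn (uncurry (Rhat i j)) (Icc (-(τ i)) 0 ×ˢ Icc (-(τ j)) 0) :=
    fun i j => continuousOn_matrix_iff.2 (hRhat i j)
  have hφ' := fun i => continuousOn_pi.2 (hφ i)
  obtain rfl : K₁ = _ := funext hK₁
  obtain rfl : K₂ = _ := funext₂ hK₂
  subst hK₀
  change controlOp τ Z₀ Z₁ Z₂ (Pop _ τ Phat _ _ _ (x, φ)) = controlOp τ _ _ _ (x, φ)
  rw [Pop_rescaled τ (hτpos _).ne', controlOp_add_smul τ _ ?state ?history,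
    controlOp_state τ _ _ ?gain, controlOp_history hτ _ _ hZ₂' hQ' hS' hR' hφ']
  · simp only [controlOp, kernelGain, smul_mulVec, integral_smul]
    rw [smul_add, Finset.smul_sum, Finset.smul_sum, add_assoc]
  case state => exact fun i => ContinuousOn.integrableOn_Icc (by fun_prop)
  case history => exact fun i => ((hZ₂' i).matrix_mulVec (((hS' i).matrix_mulVec (hφ' i)).add
    (continuousOn_sum_setIntegral_kernel hR' hφ' i))).integrableOn_Icc
  case gain => exact fun j k l => ContinuousOn.integrableOn_Icc (by fun_prop)

/-- Lemma 5: controller reconstruction `u = 𝒵 𝒫̂ x`.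
Composing the control operator `𝒵` with the hat-operator
`𝒫_{P̂,(1/τ_K)Q̂ᵢ,(1/τ_K²)Ŝᵢ,(1/τ_K)R̂ᵢⱼ}` yields the explicit gains `K₀, K₁ᵢ, K₂ᵢ`. -/
theorem controller_reconstruction
    {K n p : ℕ} (τ : Fin (K + 1) → ℝ)
    (hτpos : ∀ i, 0 < τ i) (hτmono : Monotone τ)
    (Z₀ : Matrix (Fin p) (Fin n) ℝ) (Z₁ : Fin (K + 1) → Matrix (Fin p) (Fin n) ℝ)
    (Z₂ : Fin (K + 1) → ℝ → Matrix (Fin p) (Fin n) ℝ)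
    (hZ₂ : ∀ i k l, ContinuousOn (fun s => Z₂ i s k l) (Set.Icc (-(τ i)) 0))
    (Phat : Matrix (Fin n) (Fin n) ℝ)
    (Qhat Shat : Fin (K + 1) → ℝ → Matrix (Fin n) (Fin n) ℝ)
    (Rhat : Fin (K + 1) → Fin (K + 1) → ℝ → ℝ → Matrix (Fin n) (Fin n) ℝ)
    (hQhat : ∀ i k l, ContinuousOn (fun s => Qhat i s k l) (Set.Icc (-(τ i)) 0))
    (hShat : ∀ i k l, ContinuousOn (fun s => Shat i s k l) (Set.Icc (-(τ i)) 0))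
    (hRhat : ∀ i j k l, ContinuousOn (fun q : ℝ × ℝ => Rhat i j q.1 q.2 k l)
      ((Set.Icc (-(τ i)) 0) ×ˢ (Set.Icc (-(τ j)) 0)))
    (x : Fin n → ℝ) (φ : Fin (K + 1) → ℝ → Fin n → ℝ)
    (hφ : ∀ i l, ContinuousOn (fun s => φ i s l) (Set.Icc (-(τ i)) 0))
    -- the gains
    (K₀ : Matrix (Fin p) (Fin n) ℝ) (K₁ : Fin (K + 1) → Matrix (Fin p) (Fin n) ℝ)
    (K₂ : Fin (K + 1) → ℝ → Matrix (Fin p) (Fin n) ℝ)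
    (hK₀ : K₀ = Z₀ * Phat + ∑ j, (Z₁ j * (Qhat j (-(τ j)))ᵀ
      + mIntOn (Set.Icc (-(τ j)) 0) fun s => Z₂ j s * (Qhat j s)ᵀ))
    (hK₁ : ∀ i, K₁ i = (τ (Fin.last K))⁻¹ • (Z₁ i * Shat i (-(τ i))))
    (hK₂ : ∀ i s, K₂ i s = (τ (Fin.last K))⁻¹ •
      (Z₀ * Qhat i s + Z₂ i s * Shat i s
        + ∑ j, (Z₁ j * Rhat j i (-(τ j)) s
            + mIntOn (Set.Icc (-(τ j)) 0) fun θ => Z₂ j θ * Rhat j i θ s))) :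
    -- `u = 𝒵 (𝒫̂ (x,φ))` equals the gain formula
    (Z₀.mulVec (Pop (τ (Fin.last K)) τ Phat
        (fun i s => (τ (Fin.last K))⁻¹ • Qhat i s)
        (fun i s => ((τ (Fin.last K)) ^ 2)⁻¹ • Shat i s)
        (fun i j s θ => (τ (Fin.last K))⁻¹ • Rhat i j s θ) (x, φ)).1
      + ∑ i, (Z₁ i).mulVec ((Pop (τ (Fin.last K)) τ Phat
        (fun i s => (τ (Fin.last K))⁻¹ • Qhat i s)
        (fun i s => ((τ (Fin.last K)) ^ 2)⁻¹ • Shat i s)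
        (fun i j s θ => (τ (Fin.last K))⁻¹ • Rhat i j s θ) (x, φ)).2 i (-(τ i)))
      + ∑ i, ∫ s in Set.Icc (-(τ i)) 0,
          (Z₂ i s).mulVec ((Pop (τ (Fin.last K)) τ Phat
        (fun i s => (τ (Fin.last K))⁻¹ • Qhat i s)
        (fun i s => ((τ (Fin.last K)) ^ 2)⁻¹ • Shat i s)
        (fun i j s θ => (τ (Fin.last K))⁻¹ • Rhat i j s θ) (x, φ)).2 i s))
    = K₀.mulVec x + ∑ i, (K₁ i).mulVec (φ i (-(τ i)))
        + ∑ i, ∫ s in Set.Icc (-(τ i)) 0, (K₂ i s).mulVec (φ i s) :=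
  controller_reconstruction_general τ hτpos Z₀ Z₁ Z₂ hZ₂ Phat Qhat Shat Rhat hQhat hShat hRhat x φ
    hφ K₀ K₁ K₂ hK₀ hK₁ hK₂
end
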